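/- arXiv:2105.01942 — 2 statements merged into one kernel-verified Lean document; each statement's English description precedes it below -/
import Mathlib

section
/- Let V: ℝⁿ × [0,T] → ℝ be continuously differentiable and a classical solution of the HJB equation −∂V/∂t = f·∇ₓV − ½|g(x)ᵀ∇ₓV|². Let u: [t,T] → ℝᵐ be continuous and let x: [t,T] → ℝⁿ be differentiable with x′(s) = f(x(s)) + g(x(s))u(s) for all s. Then for every s ∈ (t,T), d/ds V(x(s),s) = −½|u(s)|² + ½|u(s) + g(x(s))ᵀ∇ₓV(x(s),s)|². -/
open Matrix

/- Along the trajectory the chain rule gives `d/ds V(x(s),s) = ∇ₓV·(f + g u) + ∂ₜV`; substituting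
the HJB equation for `∂ₜV` cancels the drift term `f·∇ₓV`, and what is left,
`∇ₓV·(g u) + ½|gᵀ∇ₓV|²`, is `-½|u|² + ½|u + gᵀ∇ₓV|²` by completing the square. -/

/-- The continuous linear map `(v, τ) ↦ a ⬝ᵥ v + b * τ`, representing the total
derivative of a function `V(x,t)` with spatial gradient `a` and time derivative `b`. -/
noncomputable def pairDerivCLM {n : ℕ} (a : Fin n → ℝ) (b : ℝ) :
    ((Fin n → ℝ) × ℝ) →L[ℝ] ℝ :=
  LinearMap.toContinuousLinearMap
    { toFun := fun vτ => a ⬝ᵥ vτ.1 + b * vτ.2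
      map_add' := by intro v w; simp [dotProduct_add]; ring
      map_smul' := by intro c v; simp [dotProduct_smul]; ring }

@[simp]
theorem pairDerivCLM_apply {n : ℕ} (a : Fin n → ℝ) (b : ℝ) (v : Fin n → ℝ) (τ : ℝ) :
    pairDerivCLM a b (v, τ) = a ⬝ᵥ v + b * τ :=
  rfl

theorem HasFDerivAt.hasDerivAt_comp_graph {n : ℕ} {V : (Fin n → ℝ) → ℝ → ℝ}
    {a : Fin n → ℝ} {b : ℝ} {x : ℝ → Fin n → ℝ} {v : Fin n → ℝ} {s : ℝ}
    (hV : HasFDerivAt (fun p : (Fin n → ℝ) × ℝ => V p.1 p.2) (pairDerivCLM a b) (x s, s))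
    (hx : HasDerivAt x v s) :
    HasDerivAt (fun r => V (x r) r) (a ⬝ᵥ v + b) s := by
  have hcomp := hV.comp_hasDerivAt (f := fun r => (x r, r)) s (hx.prodMk (hasDerivAt_id s))
  rwa [pairDerivCLM_apply, mul_one] at hcomp

theorem dotProduct_mulVec_eq_half_sq_sub {K ι κ : Type*} [Field K] [CharZero K]
    [Fintype ι] [Fintype κ] (G : Matrix ι κ K) (a : ι → K) (u : κ → K) :
    a ⬝ᵥ (G *ᵥ u) = -(1/2) * (u ⬝ᵥ u) + (1/2) * ((u + Gᵀ *ᵥ a) ⬝ᵥ (u + Gᵀ *ᵥ a))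
      - (1/2) * ((Gᵀ *ᵥ a) ⬝ᵥ (Gᵀ *ᵥ a)) := by
  have hadjoint : a ⬝ᵥ (G *ᵥ u) = (Gᵀ *ᵥ a) ⬝ᵥ u := by
    rw [dotProduct_mulVec, mulVec_transpose]
  rw [hadjoint, add_dotProduct, dotProduct_add, dotProduct_add, dotProduct_comm u (Gᵀ *ᵥ a)]
  ring

theorem hjb_derivative_along_trajectory_general
    (n m : ℕ) (T t : ℝ) (ht : 0 ≤ t)
    (f : (Fin n → ℝ) → (Fin n → ℝ)) (g : (Fin n → ℝ) → Matrix (Fin n) (Fin m) ℝ)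
    (V Vt : (Fin n → ℝ) → ℝ → ℝ) (gradV : (Fin n → ℝ) → ℝ → (Fin n → ℝ))
    -- `V` is differentiable with spatial gradient `gradV` and time derivative `Vt` ...
    (hV : ∀ (x : Fin n → ℝ), ∀ s ∈ Set.Icc (0 : ℝ) T,
      HasFDerivAt (fun p : (Fin n → ℝ) × ℝ => V p.1 p.2)
        (pairDerivCLM (gradV x s) (Vt x s)) (x, s))
    -- `V` is a classical solution of the HJB equation `-∂V/∂t = f·∇ₓV - ½|gᵀ∇ₓV|²`:
    (hHJB : ∀ (x : Fin n → ℝ), ∀ s ∈ Set.Icc (0 : ℝ) T,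
      -(Vt x s) = f x ⬝ᵥ gradV x s
        - (1/2) * (((g x)ᵀ *ᵥ gradV x s) ⬝ᵥ ((g x)ᵀ *ᵥ gradV x s)))
    -- a continuous control and a corresponding trajectory:
    (u : ℝ → Fin m → ℝ)
    (x : ℝ → Fin n → ℝ)
    (hx : ∀ s ∈ Set.Icc t T, HasDerivAt x (f (x s) + (g (x s)) *ᵥ u s) s) :
    ∀ s ∈ Set.Ioo t T,
      HasDerivAt (fun r => V (x r) r)
        (-(1/2) * (u s ⬝ᵥ u s)
          + (1/2) * ((u s + (g (x s))ᵀ *ᵥ gradV (x s) s) ⬝ᵥ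
              (u s + (g (x s))ᵀ *ᵥ gradV (x s) s))) s := by
  intro s hs
  have hs0T : s ∈ Set.Icc (0 : ℝ) T := ⟨ht.trans hs.1.le, hs.2.le⟩
  have hchain := (hV (x s) s hs0T).hasDerivAt_comp_graph (hx s (Set.Ioo_subset_Icc_self hs))
  convert hchain using 1
  have hHJBs := hHJB (x s) s hs0T
  have hsquare := dotProduct_mulVec_eq_half_sq_sub (g (x s)) (gradV (x s) s) (u s)
  rw [dotProduct_add (gradV (x s) s), dotProduct_comm (gradV (x s) s) (f (x s))]
  linarith

/-- Along a solution of the control system `x' = f(x) + g(x)u`, a classical solution `V`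
of the HJB equation `-∂V/∂t = f·∇ₓV - ½|gᵀ∇ₓV|²` satisfies
`d/ds V(x(s),s) = -½|u(s)|² + ½|u(s) + g(x(s))ᵀ∇ₓV(x(s),s)|²`. -/
theorem hjb_derivative_along_trajectory
    (n m : ℕ) (T t : ℝ) (ht : 0 ≤ t) (hT : t < T)
    (f : (Fin n → ℝ) → (Fin n → ℝ)) (g : (Fin n → ℝ) → Matrix (Fin n) (Fin m) ℝ)
    (hf : Continuous f) (hg : Continuous g)
    (V Vt : (Fin n → ℝ) → ℝ → ℝ) (gradV : (Fin n → ℝ) → ℝ → (Fin n → ℝ))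
    -- `V` is differentiable with spatial gradient `gradV` and time derivative `Vt` ...
    (hV : ∀ (x : Fin n → ℝ), ∀ s ∈ Set.Icc (0 : ℝ) T,
      HasFDerivAt (fun p : (Fin n → ℝ) × ℝ => V p.1 p.2)
        (pairDerivCLM (gradV x s) (Vt x s)) (x, s))
    -- ... and continuously so:
    (hC1 : ContinuousOn (fun p : (Fin n → ℝ) × ℝ => (gradV p.1 p.2, Vt p.1 p.2))
      ((Set.univ : Set (Fin n → ℝ)) ×ˢ Set.Icc (0 : ℝ) T))
    -- `V` is a classical solution of the HJB equation `-∂V/∂t = f·∇ₓV - ½|gᵀ∇ₓV|²`: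
    (hHJB : ∀ (x : Fin n → ℝ), ∀ s ∈ Set.Icc (0 : ℝ) T,
      -(Vt x s) = f x ⬝ᵥ gradV x s
        - (1/2) * (((g x)ᵀ *ᵥ gradV x s) ⬝ᵥ ((g x)ᵀ *ᵥ gradV x s)))
    -- a continuous control and a corresponding trajectory:
    (u : ℝ → Fin m → ℝ) (hu : ContinuousOn u (Set.Icc t T))
    (x : ℝ → Fin n → ℝ)
    (hx : ∀ s ∈ Set.Icc t T, HasDerivAt x (f (x s) + (g (x s)) *ᵥ u s) s) :
    ∀ s ∈ Set.Ioo t T,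
      HasDerivAt (fun r => V (x r) r)
        (-(1/2) * (u s ⬝ᵥ u s)
          + (1/2) * ((u s + (g (x s))ᵀ *ᵥ gradV (x s) s) ⬝ᵥ
              (u s + (g (x s))ᵀ *ᵥ gradV (x s) s))) s :=
  hjb_derivative_along_trajectory_general n m T t ht f g V Vt gradV hV hHJB u x hx
end

section
/- Let A ∈ ℝ^{n×n} be Hurwitz, i.e. every eigenvalue of A (regarded as a complex matrix) has strictly negative real part, and let C ∈ ℝ^{n×m}. Then the integral Σ := ∫₀^∞ e^{sA} C Cᵀ e^{sAᵀ} ds converges, Σ is symmetric positive semidefinite, Σ satisfies the Lyapunov equation AΣ + ΣAᵀ = −CCᵀ, and Σ is the unique solution: any matrix X ∈ ℝ^{n×n} with AX + XAᵀ = −CCᵀ equals Σ. -/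
open Matrix MeasureTheory

/-- The controllability Gramian `∫₀^∞ e^{sA} C Cᵀ e^{sAᵀ} ds`, defined entrywise. -/
noncomputable def controllabilityGramian (n m : ℕ)
    (A : Matrix (Fin n) (Fin n) ℝ) (C : Matrix (Fin n) (Fin m) ℝ) :
    Matrix (Fin n) (Fin n) ℝ :=
  Matrix.of fun i j => ∫ s in Set.Ioi (0 : ℝ),
    (NormedSpace.exp (s • A) * (C * Cᵀ) * NormedSpace.exp (s • Aᵀ)) i j

/-!
If `v` is a generalized eigenvector of `A` for the eigenvalue `μ`, then `e^{sA} v = e^{sμ} p(s)`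
with `p` a vector-valued polynomial; since these vectors span `ℂⁿ` and `Re μ < 0`, we get
`e^{sA} = O(e^{-εs})` for some `ε > 0`, and likewise for `e^{sAᵀ} = (e^{sA})ᵀ`.
Hence `F(s) = e^{sA} X e^{sAᵀ}` tends to `0`, and `F' = e^{sA} (AX + XAᵀ) e^{sAᵀ}` gives
`∫₀^∞ e^{sA} (AX + XAᵀ) e^{sAᵀ} ds = -X` for every `X`. For `X = CCᵀ`, since `A` commutes with
`e^{sA}`, this is the Lyapunov equation for `Σ`; for a solution `X` it says `X = Σ`.
Each integrand `(e^{sA} C) (e^{sA} C)ᵀ` is positive semidefinite, hence so is `Σ`.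
-/

open NormedSpace Filter Asymptotics Topology Set
open scoped Nat

-- Only `O`-bounds are stated, so any submultiplicative norm on matrices would do.
attribute [local instance] Matrix.linftyOpNormedAddCommGroup Matrix.linftyOpNormedSpace
  Matrix.linftyOpNormedRing Matrix.linftyOpNormedAlgebra

theorem Set.Finite.exists_pos_forall_re_lt_neg {S : Set ℂ} (hS : S.Finite)
    (h : ∀ μ ∈ S, μ.re < 0) : ∃ ε > 0, ∀ μ ∈ S, μ.re < -ε := by
  have hev : ∀ᶠ ε in 𝓝[>] (0 : ℝ), ∀ μ ∈ S, μ.re < -ε :=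
    hS.eventually_all.2 fun μ hμ => nhdsWithin_le_nhds <|
      (continuous_neg.tendsto' (0 : ℝ) 0 neg_zero).eventually (eventually_gt_nhds (h μ hμ))
  obtain ⟨ε, hε, hε_pos⟩ := (hev.and self_mem_nhdsWithin).exists
  exact ⟨ε, hε_pos, hε⟩

theorem integrableOn_Ioi_of_isBigO_exp_neg {E : Type*} [NormedAddCommGroup E] {f : ℝ → E}
    {a b : ℝ} (hb : 0 < b) (hf : ContinuousOn f (Ici a))
    (ho : f =O[atTop] fun x => Real.exp (-b * x)) : IntegrableOn f (Ioi a) :=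
  (integrable_norm_iff ((hf.mono Ioi_subset_Ici_self).aestronglyMeasurable measurableSet_Ioi)).1
    (integrable_of_isBigO_exp_neg hb hf.norm ho.norm_left)

theorem isBigO_cexp_mul_mul_pow {μ : ℂ} {ε : ℝ} (hμ : μ.re < -ε) (j : ℕ) :
    (fun s : ℝ => Complex.exp (s * μ) * (s : ℂ) ^ j) =O[atTop] fun s => Real.exp (-ε * s) := by
  have hexp : (fun s : ℝ => Complex.exp (s * μ)) =O[atTop] fun s => Real.exp (μ.re * s) :=
    isBigO_of_le _ fun s => by simp [Complex.norm_exp, mul_comm]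
  have hpow : (fun s : ℝ => (s : ℂ) ^ j) =O[atTop] fun s => Real.exp ((-ε - μ.re) * s) := by
    have := (isLittleO_pow_exp_pos_mul_atTop j (by linarith : 0 < -ε - μ.re)).isBigO
    exact_mod_cast Complex.isBigO_ofReal_left.2 this
  exact (hexp.mul hpow).congr_right fun s => by rw [← Real.exp_add]; ring_nf

section SylvesterEquation

variable {𝔸 : Type*} [NormedRing 𝔸] [NormedAlgebra ℝ 𝔸] {a b : 𝔸} {ε : ℝ}

theorem isBigO_exp_smul_mul_mul_exp_smul
    (ha : (fun s : ℝ => exp (s • a)) =O[atTop] fun s => Real.exp (-ε * s))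
    (hb : (fun s : ℝ => exp (s • b)) =O[atTop] fun s => Real.exp (-ε * s)) (x : 𝔸) :
    (fun s : ℝ => exp (s • a) * x * exp (s • b)) =O[atTop] fun s => Real.exp (-(2 * ε) * s) :=
  ((ha.mul (isBigO_const_const x one_ne_zero atTop)).mul hb).congr_right fun s => by
    rw [mul_one, ← Real.exp_add]; ring_nf

variable [CompleteSpace 𝔸]

theorem hasDerivAt_exp_smul_mul_mul_exp_smul (a b x : 𝔸) (s : ℝ) :
    HasDerivAt (fun t : ℝ => exp (t • a) * x * exp (t • b))
      (exp (s • a) * (a * x + x * b) * exp (s • b)) s := by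
  refine (((hasDerivAt_exp_smul_const a s).mul_const x).mul
    (hasDerivAt_exp_smul_const' b s)).congr_deriv ?_
  simp only [mul_add, add_mul, mul_assoc]

theorem integrableOn_exp_smul_mul_mul_exp_smul (hε : 0 < ε)
    (ha : (fun s : ℝ => exp (s • a)) =O[atTop] fun s => Real.exp (-ε * s))
    (hb : (fun s : ℝ => exp (s • b)) =O[atTop] fun s => Real.exp (-ε * s)) (x : 𝔸) :
    IntegrableOn (fun s : ℝ => exp (s • a) * x * exp (s • b)) (Ioi 0) :=
  integrableOn_Ioi_of_isBigO_exp_neg (by positivity)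
    (continuous_iff_continuousAt.2 fun s =>
      (hasDerivAt_exp_smul_mul_mul_exp_smul a b x s).continuousAt).continuousOn
    (isBigO_exp_smul_mul_mul_exp_smul ha hb x)

theorem integral_exp_smul_mul_mul_exp_smul_eq_neg (hε : 0 < ε)
    (ha : (fun s : ℝ => exp (s • a)) =O[atTop] fun s => Real.exp (-ε * s))
    (hb : (fun s : ℝ => exp (s • b)) =O[atTop] fun s => Real.exp (-ε * s)) (x : 𝔸) :
    ∫ s in Ioi (0 : ℝ), exp (s • a) * (a * x + x * b) * exp (s • b) = -x := by
  have hlim : Tendsto (fun s : ℝ => exp (s • a) * x * exp (s • b)) atTop (𝓝 0) :=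
    (isBigO_exp_smul_mul_mul_exp_smul ha hb x).trans_tendsto <| Real.tendsto_exp_atBot.comp <|
      tendsto_id.const_mul_atTop_of_neg (by linarith)
  rw [integral_Ioi_of_hasDerivAt_of_tendsto'
    (fun s _ => hasDerivAt_exp_smul_mul_mul_exp_smul a b x s)
    (integrableOn_exp_smul_mul_mul_exp_smul hε ha hb _) hlim]
  simp

theorem mul_integral_add_integral_mul_eq_neg (hε : 0 < ε)
    (ha : (fun s : ℝ => exp (s • a)) =O[atTop] fun s => Real.exp (-ε * s))
    (hb : (fun s : ℝ => exp (s • b)) =O[atTop] fun s => Real.exp (-ε * s)) (c : 𝔸) :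
    a * (∫ s in Ioi (0 : ℝ), exp (s • a) * c * exp (s • b))
      + (∫ s in Ioi (0 : ℝ), exp (s • a) * c * exp (s • b)) * b = -c := by
  have hint := integrableOn_exp_smul_mul_mul_exp_smul hε ha hb c
  rw [← integral_const_mul_of_integrable hint, ← integral_mul_const_of_integrable hint,
    ← integral_add (hint.const_mul a) (hint.mul_const b),
    ← integral_exp_smul_mul_mul_exp_smul_eq_neg hε ha hb c]
  refine integral_congr_ae (ae_of_all _ fun s => ?_)
  have hA : a * exp (s • a) = exp (s • a) * a := ((Commute.refl a).smul_right s).exp_right.eq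
  have hB : b * exp (s • b) = exp (s • b) * b := ((Commute.refl b).smul_right s).exp_right.eq
  simp only [mul_add, add_mul, ← mul_assoc, hA]
  rw [mul_assoc _ (exp (s • b)) b, ← hB, ← mul_assoc]

theorem eq_integral_of_mul_add_mul_eq_neg (hε : 0 < ε)
    (ha : (fun s : ℝ => exp (s • a)) =O[atTop] fun s => Real.exp (-ε * s))
    (hb : (fun s : ℝ => exp (s • b)) =O[atTop] fun s => Real.exp (-ε * s)) {c x : 𝔸}
    (hx : a * x + x * b = -c) : x = ∫ s in Ioi (0 : ℝ), exp (s • a) * c * exp (s • b) := by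
  have h := integral_exp_smul_mul_mul_exp_smul_eq_neg hε ha hb x
  simp only [hx, mul_neg, neg_mul, integral_neg, neg_inj] at h
  exact h.symm

end SylvesterEquation

namespace Matrix

theorem linfty_opNorm_le_sum_sum {m n E : Type*} [Fintype m] [Fintype n] [NormedAddCommGroup E]
    (M : Matrix m n E) : ‖M‖ ≤ ∑ i, ∑ j, ‖M i j‖ := by
  have : ‖M‖₊ ≤ ∑ i, ∑ j, ‖M i j‖₊ := linfty_opNNNorm_def M ▸ Finset.sup_le fun i _ =>
    Finset.single_le_sum (f := fun i => ∑ j, ‖M i j‖₊) (fun _ _ => zero_le) (Finset.mem_univ i)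
  simpa only [← coe_nnnorm, ← NNReal.coe_sum] using NNReal.coe_le_coe.2 this

theorem isBigO_of_forall_isBigO_apply {α m n E F : Type*} [Fintype m] [Fintype n]
    [NormedAddCommGroup E] [Norm F] {l : Filter α} {f : α → Matrix m n E} {g : α → F}
    (h : ∀ i j, (fun x => f x i j) =O[l] g) : f =O[l] g :=
  (isBigO_of_le l fun x => (linfty_opNorm_le_sum_sum (f x)).trans (le_abs_self _)).trans <|
    IsBigO.fun_sum fun i _ => IsBigO.fun_sum fun j _ => (h i j).norm_left

variable {ι : Type*} [Fintype ι]

theorem posSemidef_of_integrable_apply {α : Type*} [MeasurableSpace α] {μ : Measure α}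
    {f : α → Matrix ι ι ℝ} (hf : ∀ i j, Integrable (fun x => f x i j) μ)
    (hpos : ∀ x, (f x).PosSemidef) : (of fun i j => ∫ x, f x i j ∂μ).PosSemidef := by
  refine PosSemidef.of_dotProduct_mulVec_nonneg ?_ fun v => ?_
  · ext i j
    simpa using integral_congr_ae (ae_of_all μ fun x => (hpos x).isHermitian.apply i j)
  · have hquad : star v ⬝ᵥ (of fun i j => ∫ x, f x i j ∂μ) *ᵥ v
        = ∫ x, star v ⬝ᵥ f x *ᵥ v ∂μ := by
      simp only [dotProduct, mulVec, of_apply, Finset.mul_sum]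
      rw [integral_finsetSum _ fun i _ =>
        integrable_finsetSum _ fun j _ => ((hf i j).mul_const _).const_mul _]
      refine Finset.sum_congr rfl fun i _ => ?_
      rw [integral_finsetSum _ fun j _ => ((hf i j).mul_const _).const_mul _]
      refine Finset.sum_congr rfl fun j _ => ?_
      rw [integral_const_mul, integral_mul_const]
    rw [hquad]
    exact integral_nonneg fun x => (hpos x).dotProduct_mulVec_nonneg v

variable [DecidableEq ι]

theorem exp_eq_cexp_smul_exp_sub (B : Matrix ι ι ℂ) (z : ℂ) :
    exp B = Complex.exp z • exp (B - z • 1) := by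
  have hscalar : exp (algebraMap ℂ (Matrix ι ι ℂ) z) = algebraMap ℂ _ (Complex.exp z) := by
    rw [Complex.exp_eq_exp_ℂ]
    exact (map_exp (algebraMap ℂ (Matrix ι ι ℂ)) (continuous_algebraMap ℂ _) z).symm
  conv_lhs => rw [← add_sub_cancel (z • (1 : Matrix ι ι ℂ)) B]
  rw [Matrix.exp_add_of_commute _ _ ((Commute.one_left _).smul_left z),
    ← Algebra.algebraMap_eq_smul_one, hscalar, Algebra.smul_def]

theorem exp_mulVec_eq_sum_of_pow_mulVec_eq_zero {𝕂 : Type*} [RCLike 𝕂] (N : Matrix ι ι 𝕂)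
    {v : ι → 𝕂} {k : ℕ} (hv : (N ^ k) *ᵥ v = 0) :
    exp N *ᵥ v = ∑ j ∈ Finset.range k, (j !⁻¹ : 𝕂) • (N ^ j *ᵥ v) := by
  have hsum : HasSum (fun j => ((j !⁻¹ : 𝕂) • N ^ j) *ᵥ v) (exp N *ᵥ v) :=
    (exp_series_hasSum_exp' N).map (mulVec.addMonoidHomLeft v)
      (continuous_id.matrix_mulVec continuous_const)
  simp only [smul_mulVec] at hsum
  refine hsum.unique (hasSum_sum_of_ne_finset_zero fun j hj => ?_)
  rw [Finset.mem_range, not_lt] at hj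
  rw [← Nat.sub_add_cancel hj, pow_add, ← mulVec_mulVec, hv, mulVec_zero, smul_zero]

def expDecaySubmodule (B : Matrix ι ι ℂ) (ε : ℝ) : Submodule ℂ (ι → ℂ) where
  carrier := {v | (fun s : ℝ => exp ((s : ℂ) • B) *ᵥ v) =O[atTop] fun s => Real.exp (-ε * s)}
  add_mem' {v w} hv hw := by simpa only [Set.mem_ofPred_eq, mulVec_add] using hv.add hw
  zero_mem' := by simpa only [Set.mem_ofPred_eq, mulVec_zero] using isBigO_zero _ _
  smul_mem' c v hv := by
    simp only [Set.mem_ofPred_eq, mulVec_smul]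
    exact hv.const_smul_left c

theorem mem_expDecaySubmodule_of_mem_maxGenEigenspace (B : Matrix ι ι ℂ) {ε : ℝ} {μ : ℂ}
    (hμ : μ.re < -ε) {v : ι → ℂ} (hv : v ∈ Module.End.maxGenEigenspace (toLin' B) μ) :
    v ∈ B.expDecaySubmodule ε := by
  obtain ⟨k, hk⟩ := (Module.End.mem_maxGenEigenspace _ _ _).1 hv
  set N := B - μ • 1
  have hNk : (N ^ k) *ᵥ v = 0 := by
    rwa [← toLin'_apply, toLin'_pow, map_sub, map_smul, toLin'_one]
  have hexpand : ∀ s : ℝ, exp ((s : ℂ) • B) *ᵥ v = ∑ j ∈ Finset.range k,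
      (Complex.exp (s * μ) * (s : ℂ) ^ j) • ((j !⁻¹ : ℂ) • (N ^ j *ᵥ v)) := by
    intro s
    have hsN : ((s : ℂ) • N) ^ k *ᵥ v = 0 := by rw [smul_pow, smul_mulVec, hNk, smul_zero]
    rw [exp_eq_cexp_smul_exp_sub _ (s * μ), smul_mulVec,
      show (s : ℂ) • B - ((s : ℂ) * μ) • 1 = (s : ℂ) • N by rw [smul_sub, smul_smul],
      exp_mulVec_eq_sum_of_pow_mulVec_eq_zero _ hsN, Finset.smul_sum]
    refine Finset.sum_congr rfl fun j _ => ?_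
    rw [smul_pow, smul_mulVec, smul_comm _ ((s : ℂ) ^ j), smul_smul]
  change _ =O[atTop] _
  simp only [hexpand]
  exact IsBigO.fun_sum fun j _ => by
    simpa using (isBigO_cexp_mul_mul_pow hμ j).smul
      (isBigO_const_const ((j !⁻¹ : ℂ) • (N ^ j *ᵥ v)) (one_ne_zero' ℝ) atTop)

theorem isBigO_exp_smul_mulVec (B : Matrix ι ι ℂ) {ε : ℝ} (hB : ∀ μ ∈ spectrum ℂ B, μ.re < -ε)
    (v : ι → ℂ) :
    (fun s : ℝ => exp ((s : ℂ) • B) *ᵥ v) =O[atTop] fun s => Real.exp (-ε * s) := by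
  suffices ⊤ ≤ B.expDecaySubmodule ε from this Submodule.mem_top
  rw [← Module.End.iSup_maxGenEigenspace_eq_top (toLin' B)]
  refine iSup_le fun μ w hw => ?_
  rcases eq_or_ne w 0 with rfl | hw0
  · exact Submodule.zero_mem _
  have hμ : μ ∈ spectrum ℂ B := by
    rw [← spectrum_toLin']
    exact Module.End.HasUnifEigenvalue.mem_spectrum
      (Module.End.HasUnifEigenvalue.lt zero_lt_one ((Submodule.ne_bot_iff _).2 ⟨w, hw, hw0⟩))
  exact mem_expDecaySubmodule_of_mem_maxGenEigenspace B (hB μ hμ) hw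

theorem map_ofReal_exp_smul (A : Matrix ι ι ℝ) (s : ℝ) :
    (exp (s • A)).map Complex.ofReal = exp ((s : ℂ) • A.map Complex.ofReal) := by
  have hsmul : Complex.ofRealHom.mapMatrix (s • A) = (s : ℂ) • A.map Complex.ofReal := by
    ext i j
    simp
  rw [← hsmul]
  exact map_exp (Complex.ofRealHom.mapMatrix : Matrix ι ι ℝ →+* Matrix ι ι ℂ)
    (continuous_id.matrix_map Complex.continuous_ofReal) (s • A)

theorem exists_pos_isBigO_exp_smul_apply (A : Matrix ι ι ℝ)
    (hA : ∀ μ ∈ spectrum ℂ (A.map Complex.ofReal), μ.re < 0) :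
    ∃ ε > 0, ∀ i j, (fun s : ℝ => exp (s • A) i j) =O[atTop] fun s => Real.exp (-ε * s) := by
  obtain ⟨ε, hε, hspec⟩ := (finite_spectrum _).exists_pos_forall_re_lt_neg hA
  refine ⟨ε, hε, fun i j => Complex.isBigO_ofReal_left.1 ?_⟩
  refine (isBigO_pi.1 (isBigO_exp_smul_mulVec _ hspec (Pi.single j 1)) i).congr_left fun s => ?_
  rw [← map_ofReal_exp_smul, mulVec_single_one]
  rfl

end Matrix

/-- For a Hurwitz matrix `A` and any `C`, the Gramian `Σ = ∫₀^∞ e^{sA} C Cᵀ e^{sAᵀ} ds`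
converges (entrywise), is symmetric positive semidefinite, solves the Lyapunov equation
`AΣ + ΣAᵀ = -CCᵀ`, and is its unique solution. -/
theorem lyapunov_equation_unique_solution
    (n m : ℕ) (A : Matrix (Fin n) (Fin n) ℝ) (C : Matrix (Fin n) (Fin m) ℝ)
    -- `A` is Hurwitz: all eigenvalues of `A` as a complex matrix have negative real part
    (hA : ∀ μ ∈ spectrum ℂ (A.map Complex.ofReal), μ.re < 0) :
    (∀ i j, IntegrableOn
        (fun s : ℝ =>
          (NormedSpace.exp (s • A) * (C * Cᵀ) * NormedSpace.exp (s • Aᵀ)) i j)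
        (Set.Ioi (0 : ℝ))) ∧
      (controllabilityGramian n m A C).PosSemidef ∧
      A * controllabilityGramian n m A C + controllabilityGramian n m A C * Aᵀ
        = -(C * Cᵀ) ∧
      ∀ X : Matrix (Fin n) (Fin n) ℝ,
        A * X + X * Aᵀ = -(C * Cᵀ) → X = controllabilityGramian n m A C := by
  obtain ⟨ε, hε, hdecay⟩ := exists_pos_isBigO_exp_smul_apply A hA
  have hexpA : (fun s : ℝ => exp (s • A)) =O[atTop] fun s => Real.exp (-ε * s) :=
    isBigO_of_forall_isBigO_apply hdecay
  have hexpAT : (fun s : ℝ => exp (s • Aᵀ)) =O[atTop] fun s => Real.exp (-ε * s) :=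
    isBigO_of_forall_isBigO_apply fun i j => by
      simpa only [← transpose_smul, exp_transpose, transpose_apply] using hdecay j i
  have hint := integrableOn_exp_smul_mul_mul_exp_smul hε hexpA hexpAT (C * Cᵀ)
  have hentry : ∀ i j, IntegrableOn
      (fun s : ℝ => (exp (s • A) * (C * Cᵀ) * exp (s • Aᵀ)) i j) (Ioi (0 : ℝ)) :=
    fun i j => (entryLinearMap ℝ ℝ i j).toContinuousLinearMap.integrable_comp hint
  have hgram : controllabilityGramian n m A C
      = ∫ s in Ioi (0 : ℝ), exp (s • A) * (C * Cᵀ) * exp (s • Aᵀ) := by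
    ext i j
    exact (entryLinearMap ℝ ℝ i j).toContinuousLinearMap.integral_comp_comm hint
  refine ⟨hentry, posSemidef_of_integrable_apply hentry fun s => ?_, ?_, fun X hX => ?_⟩
  · have hfactor : exp (s • A) * (C * Cᵀ) * exp (s • Aᵀ)
        = exp (s • A) * C * (exp (s • A) * C)ᴴ := by
      rw [conjTranspose_eq_transpose_of_trivial, transpose_mul, ← exp_transpose, transpose_smul]
      simp only [Matrix.mul_assoc]
    exact hfactor ▸ posSemidef_self_mul_conjTranspose _
  · rw [hgram]
    exact mul_integral_add_integral_mul_eq_neg hε hexpA hexpAT _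
  · rw [hgram]
    exact eq_integral_of_mul_add_mul_eq_neg hε hexpA hexpAT hX
end
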